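/- Let H and Y be square complex matrices of the same size with H Hermitian and negative semidefinite (H has no positive eigenvalues). Then ‖e^{H+Y}‖ ≤ e^{‖Y‖}, where ‖·‖ is the operator norm and e^{·} the matrix exponential. -/

import Mathlib

open scoped BigOperators
open MeasureTheory
open scoped ComplexOrder

noncomputable section

/-- Configuration space of a chain of `n` sites, each consisting of `q` qubits
(local dimension `2^q`). -/
abbrev SpinIdx (n q : ℕ) : Type := Fin n → Fin q → Fin 2

/-- Matrices (linear operators) on the chain Hilbert space `(ℂ^{2^q})^{⊗ n}`. -/
abbrev Mat (n q : ℕ) : Type := Matrix (SpinIdx n q) (SpinIdx n q) ℂ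

/-- Operator norm (largest singular value) of a complex matrix. -/
def opNorm {m : Type*} [Fintype m] [DecidableEq m] (M : Matrix m m ℂ) : ℝ :=
  ‖LinearMap.toContinuousLinearMap (Matrix.toEuclideanLin M)‖

/-- Matrix exponential. -/
def mexp {m : Type*} [Fintype m] [DecidableEq m] (M : Matrix m m ℂ) : Matrix m m ℂ :=
  NormedSpace.exp M

open Classical in
/-- The positive semidefinite square root of a matrix (junk value `0` if the matrix is
not positive semidefinite). -/
def msqrt {m : Type*} [Fintype m] [DecidableEq m] (ρ : Matrix m m ℂ) : Matrix m m ℂ :=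
  if h : ρ.PosSemidef then
    (h.1.eigenvectorUnitary : Matrix m m ℂ) *
      Matrix.diagonal ((↑) ∘ (Real.sqrt ∘ h.1.eigenvalues)) *
      (star h.1.eigenvectorUnitary : Matrix m m ℂ)
  else 0

/-- KMS inner product `⟨X,Y⟩_ρ = Tr[X† ρ^{1/2} Y ρ^{1/2}]`. -/
def kmsInner {m : Type*} [Fintype m] [DecidableEq m] (ρ X Y : Matrix m m ℂ) : ℂ :=
  (X.conjTranspose * msqrt ρ * Y * msqrt ρ).trace

/-- Squared KMS norm `‖X‖_ρ²`. -/
def kmsNormSq {m : Type*} [Fintype m] [DecidableEq m] (ρ X : Matrix m m ℂ) : ℝ :=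
  (kmsInner ρ X X).re

/-- KMS norm `‖X‖_ρ`. -/
def kmsNorm {m : Type*} [Fintype m] [DecidableEq m] (ρ X : Matrix m m ℂ) : ℝ :=
  Real.sqrt (kmsNormSq ρ X)

/-- Commutator `[A,B] = AB - BA`. -/
def mComm {m : Type*} [Fintype m] (A B : Matrix m m ℂ) : Matrix m m ℂ :=
  A * B - B * A

/-- The four Pauli matrices `I, X, Y, Z`. -/
def pauli : Fin 4 → Matrix (Fin 2) (Fin 2) ℂ :=
  ![1, !![0, 1; 1, 0], !![0, -Complex.I; Complex.I, 0], !![1, 0; 0, -1]]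

/-- The single-site Pauli jump operator at site `i` given by the Pauli word `p`:
it acts as `⊗_{k<q} pauli (p k)` on the `i`-th site and as the identity elsewhere. -/
def pauliOp (n q : ℕ) (i : Fin n) (p : Fin q → Fin 4) : Mat n q :=
  Matrix.of fun a b =>
    (∏ k : Fin q, pauli (p k) (a i k) (b i k)) *
      (if Function.update a i (b i) = b then 1 else 0)

/-- `X` is supported on the set `S` of sites: it acts as the identity on all tensor
factors outside `S` (i.e. `X = X_S ⊗ I_{S^c}`), stated entrywise. -/
def SupportedOn {n q : ℕ} (S : Set (Fin n)) (X : Mat n q) : Prop :=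
  (∀ a b a' b' : SpinIdx n q,
      (∀ i ∈ S, a i = a' i) → (∀ i ∈ S, b i = b' i) →
      (∀ i ∉ S, a i = b i) → (∀ i ∉ S, a' i = b' i) →
      X a b = X a' b') ∧
  ∀ a b : SpinIdx n q, (∃ i ∉ S, a i ≠ b i) → X a b = 0

/-- `h` is a family of nearest-neighbour terms of a 1D Hamiltonian: each `h b` is Hermitian, has
operator norm at most 1, is supported on the sites `{b, b+1}`, and the (nonexistent) last
link is zero. -/
def IsOneDimTerms (n q : ℕ) (h : Fin n → Mat n q) : Prop :=
  (∀ b, (h b).IsHermitian) ∧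
  (∀ b, opNorm (h b) ≤ 1) ∧
  (∀ b : Fin n, SupportedOn {i : Fin n | (i : ℕ) = (b : ℕ) ∨ (i : ℕ) = (b : ℕ) + 1} (h b)) ∧
  ∀ b : Fin n, (b : ℕ) + 1 = n → h b = 0

/-- `H` is a 1D Hamiltonian with nearest-neighbour interactions of strength at most 1. -/
def IsOneDimHamiltonian (n q : ℕ) (H : Mat n q) : Prop :=
  ∃ h : Fin n → Mat n q, IsOneDimTerms n q h ∧ H = ∑ b, h b

/-- The Gibbs state `e^{-βH}/Tr[e^{-βH}]`. -/
def gibbs {m : Type*} [Fintype m] [DecidableEq m] (β : ℝ) (H : Matrix m m ℂ) : Matrix m m ℂ :=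
  ((mexp ((-β : ℂ) • H)).trace)⁻¹ • mexp ((-β : ℂ) • H)

/-- Lattice distance between two subsets of the chain. -/
def chainDist {n : ℕ} (A C : Finset (Fin n)) : ℕ :=
  sInf {d : ℕ | ∃ i ∈ A, ∃ j ∈ C, d = ((i : ℤ) - (j : ℤ)).natAbs}

/-- A contiguous set of sites. -/
def IsChainInterval {n : ℕ} (A : Finset (Fin n)) : Prop :=
  ∀ i ∈ A, ∀ k ∈ A, ∀ j : Fin n, i ≤ j → j ≤ k → j ∈ A

/-- The interval of sites `[s, t)` of the chain. -/
def chainInterval (n s t : ℕ) : Finset (Fin n) :=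
  Finset.univ.filter fun i => s ≤ (i : ℕ) ∧ (i : ℕ) < t

/-- Entrywise (Bochner) integral of a matrix-valued function on `ℝ`. -/
def mIntegral {m : Type*} [Fintype m] (F : ℝ → Matrix m m ℂ) : Matrix m m ℂ :=
  Matrix.of fun i j => ∫ t : ℝ, F t i j

/-- Heisenberg evolution `e^{iHt} A e^{-iHt}`. -/
def heis {m : Type*} [Fintype m] [DecidableEq m] (H : Matrix m m ℂ) (t : ℝ)
    (A : Matrix m m ℂ) : Matrix m m ℂ :=
  mexp ((Complex.I * (t : ℂ)) • H) * A * mexp ((-(Complex.I * (t : ℂ))) • H)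

/-- Gaussian filter function `f_σ(t) = e^{-σ²t²} (σ √(2/π))^{1/2}`. -/
def fGauss (σ t : ℝ) : ℝ :=
  Real.exp (-(σ ^ 2 * t ^ 2)) * Real.sqrt (σ * Real.sqrt (2 / Real.pi))

/-- Operator Fourier transform `Â_σ(ω) = (2π)^{-1/2} ∫ e^{iHt} A e^{-iHt} e^{-iωt} f_σ(t) dt`. -/
def oft {m : Type*} [Fintype m] [DecidableEq m] (σ : ℝ) (H A : Matrix m m ℂ) (ω : ℝ) :
    Matrix m m ℂ :=
  ((Real.sqrt (2 * Real.pi) : ℂ))⁻¹ •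
    mIntegral fun t => ((fGauss σ t : ℂ) * Complex.exp (-(Complex.I * (ω : ℂ) * (t : ℂ)))) • heis H t A

/-- Time-evolved operator Fourier transform `Â_σ(ω,t) = e^{iHt} Â_σ(ω) e^{-iHt}`. -/
def oftT {m : Type*} [Fintype m] [DecidableEq m] (σ : ℝ) (H A : Matrix m m ℂ) (ω t : ℝ) :
    Matrix m m ℂ :=
  heis H t (oft σ H A ω)

/-- The time weight `g(t) = 1/(β cosh(2πt/β))`. -/
def gWeight (β t : ℝ) : ℝ := (β * Real.cosh (2 * Real.pi * t / β))⁻¹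

/-- The Gaussian frequency filter `h_G(ω) = e^{-1/4} e^{-ω²β²/2}`. -/
def hGaussW (β ω : ℝ) : ℝ := Real.exp (-(1 / 4 : ℝ)) * Real.exp (-(ω ^ 2 * β ^ 2) / 2)

/-- The Dirichlet form `⟨O, -L†[O]⟩_ρ` of the exactly detailed-balanced Lindbladian with all
single-site Pauli jumps, Gaussian weight, and energy width `σ = 1/β`. -/
def dirichletL (n q : ℕ) (β : ℝ) (H ρ O : Mat n q) : ℝ :=
  ∑ i : Fin n, ∑ p : Fin q → Fin 4,
    ∫ ω : ℝ, ∫ t : ℝ,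
      gWeight β t * hGaussW β ω *
        kmsNormSq ρ (mComm (oftT (1 / β) H (pauliOp n q i p) ω t) O)

/-- The Dirichlet form `Σ_a ‖[A^a, O]‖_ρ²` of the generator `K` with all single-site
Pauli jumps. -/
def dirichletK (n q : ℕ) (ρ O : Mat n q) : ℝ :=
  ∑ i : Fin n, ∑ p : Fin q → Fin 4, kmsNormSq ρ (mComm (pauliOp n q i p) O)

/-- `E` is the KMS-orthogonal projection (w.r.t. the state `ρ`) onto the subspace of operators
supported on the complement of `R`: the spectral conditional expectation `Ẽ_R`. -/
def IsKMSProjOnto {n q : ℕ} (ρ : Mat n q) (R : Set (Fin n)) (E : Mat n q → Mat n q) : Prop :=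
  (∀ O, SupportedOn Rᶜ (E O)) ∧
  ∀ O Z, SupportedOn Rᶜ Z → kmsInner ρ Z (O - E O) = 0


open scoped InnerProductSpace

set_option maxRecDepth 8000 in
set_option maxHeartbeats 1000000 in
/-- Semigroup bound: if `Re ⟪x, T x⟫ ≤ c ‖x‖²` for all `x`, then `‖exp T‖ ≤ e^c`. -/
lemma norm_exp_le_of_re_inner_le {E : Type*} [NormedAddCommGroup E] [InnerProductSpace ℂ E]
    [CompleteSpace E] (T : E →L[ℂ] E) (c : ℝ)
    (hc : ∀ x : E, (⟪x, T x⟫_ℂ).re ≤ c * ‖x‖ ^ 2) :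
    ‖NormedSpace.exp T‖ ≤ Real.exp c := by
  refine ContinuousLinearMap.opNorm_le_bound _ (Real.exp_nonneg c) fun v => ?_
  set u : ℝ → E := fun t => NormedSpace.exp ((t : ℂ) • T) v with hu
  have hud : ∀ t : ℝ, HasDerivAt u (T (u t)) t := by
    intro t
    have h1 : HasDerivAt (fun z : ℂ => NormedSpace.exp (z • T))
        (T * NormedSpace.exp ((t : ℂ) • T)) (t : ℂ) :=
      hasDerivAt_exp_smul_const' T (t : ℂ)
    have h2 : HasDerivAt (fun s : ℝ => NormedSpace.exp ((s : ℂ) • T))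
        (T * NormedSpace.exp ((t : ℂ) • T)) t := by
      have := h1.scomp t Complex.ofRealCLM.hasDerivAt
      rw [Complex.ofRealCLM_apply, Complex.ofReal_one, one_smul] at this
      exact this
    have h3 := ((ContinuousLinearMap.apply ℂ E v).restrictScalars ℝ).hasFDerivAt.comp_hasDerivAt
      t h2
    simp only [Function.comp_def, ContinuousLinearMap.coe_restrictScalars',
      ContinuousLinearMap.apply_apply, ContinuousLinearMap.mul_apply] at h3
    exact h3
  have hf : ∀ t : ℝ, HasDerivAt (fun s => ‖u s‖ ^ 2) (2 * (⟪u t, T (u t)⟫_ℂ).re) t := by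
    intro t
    have h1 := HasDerivAt.inner (𝕜 := ℂ) (hud t) (hud t)
    have h2 : HasDerivAt (fun s => (⟪u s, u s⟫_ℂ).re)
        (Complex.reCLM (⟪u t, T (u t)⟫_ℂ + ⟪T (u t), u t⟫_ℂ)) t :=
      Complex.reCLM.hasFDerivAt.comp_hasDerivAt t h1
    have heq : (fun s => (⟪u s, u s⟫_ℂ).re) = fun s => ‖u s‖ ^ 2 := by
      funext s
      simpa using inner_self_eq_norm_sq (𝕜 := ℂ) (u s)
    rw [heq] at h2
    convert h2 using 1
    have h4 : ⟪T (u t), u t⟫_ℂ = starRingEnd ℂ ⟪u t, T (u t)⟫_ℂ := (inner_conj_symm _ _).symm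
    rw [h4]
    simp only [Complex.reCLM_apply, Complex.add_re, Complex.conj_re]
    ring
  set g : ℝ → ℝ := fun s => Real.exp (-(2 * c) * s) * ‖u s‖ ^ 2 with hg
  have hgd : ∀ t : ℝ, HasDerivAt g
      (Real.exp (-(2 * c) * t) * (-(2 * c)) * ‖u t‖ ^ 2 +
        Real.exp (-(2 * c) * t) * (2 * (⟪u t, T (u t)⟫_ℂ).re)) t := by
    intro t
    have h0 := (((hasDerivAt_id t).const_mul (-(2 * c))).exp).mul (hf t)
    simp only [id_eq, mul_one] at h0
    exact h0
  have hmono : Antitone g := by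
    apply antitone_of_deriv_nonpos
    · intro t
      exact (hgd t).differentiableAt
    · intro t
      rw [(hgd t).deriv]
      have h5 : (⟪u t, T (u t)⟫_ℂ).re ≤ c * ‖u t‖ ^ 2 := hc (u t)
      have h6 : (0 : ℝ) < Real.exp (-(2 * c) * t) := Real.exp_pos _
      nlinarith
  have key : g 1 ≤ g 0 := hmono (by norm_num)
  have hu0 : u 0 = v := by
    simp only [hu, Complex.ofReal_zero, zero_smul, NormedSpace.exp_zero,
      ContinuousLinearMap.one_apply]
  have hu1 : u 1 = NormedSpace.exp T v := by
    simp only [hu, Complex.ofReal_one, one_smul]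
  rw [hg] at key
  simp only [hu0, hu1, mul_zero, mul_one, Real.exp_zero, one_mul, neg_mul] at key
  -- key : Real.exp (-(2*c)) * ‖exp T v‖ ^ 2 ≤ ‖v‖ ^ 2
  have h7 : ‖NormedSpace.exp T v‖ ^ 2 ≤ (Real.exp c * ‖v‖) ^ 2 := by
    have h8 : (0 : ℝ) < Real.exp (-(2 * c)) := Real.exp_pos _
    have h9 : Real.exp (-(2 * c)) * Real.exp c * Real.exp c = 1 := by
      rw [← Real.exp_add, ← Real.exp_add, show -(2 * c) + c + c = 0 by ring, Real.exp_zero]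
    nlinarith [norm_nonneg (NormedSpace.exp T v), norm_nonneg v]
  calc ‖NormedSpace.exp T v‖ = Real.sqrt (‖NormedSpace.exp T v‖ ^ 2) :=
        (Real.sqrt_sq (norm_nonneg _)).symm
    _ ≤ Real.sqrt ((Real.exp c * ‖v‖) ^ 2) := Real.sqrt_le_sqrt h7
    _ = Real.exp c * ‖v‖ := Real.sqrt_sq (by positivity)

open scoped Matrix.Norms.L2Operator in
lemma opNorm_eq_norm_toEuclideanCLM {m : Type*} [Fintype m] [DecidableEq m]
    (M : Matrix m m ℂ) : opNorm M = ‖Matrix.toEuclideanCLM (𝕜 := ℂ) M‖ := rfl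

open scoped Matrix.Norms.L2Operator in
lemma toEuclideanCLM_mexp {m : Type*} [Fintype m] [DecidableEq m] (M : Matrix m m ℂ) :
    Matrix.toEuclideanCLM (𝕜 := ℂ) (mexp M) =
      NormedSpace.exp (Matrix.toEuclideanCLM (𝕜 := ℂ) M) := by
  have h : Continuous (Matrix.toEuclideanCLM (n := m) (𝕜 := ℂ)) :=
    LinearMap.continuous_of_finiteDimensional
      ({ toFun := ⇑(Matrix.toEuclideanCLM (n := m) (𝕜 := ℂ)), map_add' := map_add _,
         map_smul' := map_smul _ } : Matrix m m ℂ →ₗ[ℂ] _)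
  letI : NormedAlgebra ℚ (Matrix m m ℂ) := .restrictScalars ℚ ℂ _
  exact NormedSpace.map_exp (Matrix.toEuclideanCLM (n := m) (𝕜 := ℂ)) h M

open scoped InnerProductSpace in
open Matrix in
lemma inner_toEuclideanCLM {m : Type*} [Fintype m] [DecidableEq m]
    (M : Matrix m m ℂ) (x : EuclideanSpace ℂ m) :
    ⟪x, Matrix.toEuclideanCLM (𝕜 := ℂ) M x⟫_ℂ =
      dotProduct (star ((WithLp.equiv 2 _) x)) (M *ᵥ ((WithLp.equiv 2 _) x)) := by
  rw [EuclideanSpace.inner_eq_star_dotProduct]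
  simp [Matrix.toLin'_apply, dotProduct_comm]

/-- if `H` is Hermitian and negative semidefinite, then for any matrix `Y`
of the same size, `‖e^{H+Y}‖ ≤ e^{‖Y‖}` in operator norm. -/
theorem opNorm_exp_add_le {m : Type*} [Fintype m] [DecidableEq m]
    (H Y : Matrix m m ℂ) (hH : (-H).PosSemidef) :
    opNorm (mexp (H + Y)) ≤ Real.exp (opNorm Y) := by
  rw [opNorm_eq_norm_toEuclideanCLM, toEuclideanCLM_mexp]
  apply norm_exp_le_of_re_inner_le
  intro x
  set x' : m → ℂ := (WithLp.equiv 2 _) x with hx'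
  have hsplit : (⟪x, Matrix.toEuclideanCLM (𝕜 := ℂ) (H + Y) x⟫_ℂ).re =
      (⟪x, Matrix.toEuclideanCLM (𝕜 := ℂ) H x⟫_ℂ).re +
        (⟪x, Matrix.toEuclideanCLM (𝕜 := ℂ) Y x⟫_ℂ).re := by
    rw [map_add, ContinuousLinearMap.add_apply, inner_add_right, Complex.add_re]
  have hHpart : (⟪x, Matrix.toEuclideanCLM (𝕜 := ℂ) H x⟫_ℂ).re ≤ 0 := by
    rw [inner_toEuclideanCLM]
    have h1 := hH.re_dotProduct_nonneg x'
    have h2 : dotProduct (star x') (Matrix.mulVec (-H) x') =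
        -dotProduct (star x') (Matrix.mulVec H x') := by
      rw [Matrix.neg_mulVec, dotProduct_neg]
    rw [h2] at h1
    simp only [RCLike.re_to_complex, Complex.neg_re] at h1
    linarith
  have hYpart : (⟪x, Matrix.toEuclideanCLM (𝕜 := ℂ) Y x⟫_ℂ).re ≤ opNorm Y * ‖x‖ ^ 2 := by
    have h1 : (⟪x, Matrix.toEuclideanCLM (𝕜 := ℂ) Y x⟫_ℂ).re ≤
        ‖⟪x, Matrix.toEuclideanCLM (𝕜 := ℂ) Y x⟫_ℂ‖ :=
      Complex.re_le_norm _
    have h2 : ‖⟪x, Matrix.toEuclideanCLM (𝕜 := ℂ) Y x⟫_ℂ‖ ≤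
        ‖x‖ * ‖Matrix.toEuclideanCLM (𝕜 := ℂ) Y x‖ := norm_inner_le_norm _ _
    have h3 : ‖Matrix.toEuclideanCLM (𝕜 := ℂ) Y x‖ ≤
        ‖Matrix.toEuclideanCLM (𝕜 := ℂ) Y‖ * ‖x‖ :=
      (Matrix.toEuclideanCLM (𝕜 := ℂ) Y).le_opNorm x
    rw [← opNorm_eq_norm_toEuclideanCLM] at h3
    have h4 : (0 : ℝ) ≤ ‖x‖ := norm_nonneg _
    nlinarith
  rw [hsplit]
  linarith

end
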